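/- arXiv:1303.0730 — 3 statements merged into one kernel-verified Lean document; each statement's English description precedes it below -/
import Mathlib

section
/- In the semantics of linear temporal logic over ℕ, there is no predicate P : ℕ → Prop such that for all n, P(n) ↔ (∀ k > n, ¬P(k)). -/
section Yablo

variable {α : Type*} [Preorder α] [NoMaxOrder α]

theorem not_of_yablo {P : α → Prop} (hP : ∀ a, P a ↔ ∀ b, a < b → ¬P b) (a : α) : ¬P a := by
  intro ha
  have hlater : ∀ b, a < b → ¬P b := (hP a).mp ha
  obtain ⟨b, hab⟩ := exists_gt a
  -- Everything above `b` lies above `a`, hence is false, so `b` itself is true.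
  exact hlater b hab ((hP b).mpr fun c hbc => hlater c (hab.trans hbc))

theorem not_exists_yablo [Nonempty α] : ¬∃ P : α → Prop, ∀ a, P a ↔ ∀ b, a < b → ¬P b := by
  rintro ⟨P, hP⟩
  obtain ⟨a⟩ := ‹Nonempty α›
  exact not_of_yablo hP a ((hP a).mpr fun b _ => not_of_yablo hP b)

end Yablo

theorem no_yablo_predicate :
    ¬ ∃ P : ℕ → Prop, ∀ n : ℕ, P n ↔ ∀ k : ℕ, k > n → ¬ P k :=
  not_exists_yablo
end

section
/- There is no predicate P : ℕ → Prop satisfying P(n) ↔ (∀ m ≥ n+1, ¬P(m)) for all n; equivalently, the operator taking a time-indexed proposition P to the proposition 'P is false at all future times' has no fixed point. -/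
/-! If `P` held at some time `a`, it would fail at every later time; then at any `b > a` it fails
at all times after `b`, so the fixed-point equation forces `P b`, a contradiction. Hence `P` fails
everywhere, and then the equation forces `P` at any time at all. -/

def IsYablo {α : Type*} [Preorder α] (P : α → Prop) : Prop :=
  ∀ a, P a ↔ ∀ b, a < b → ¬ P b

section

variable {α : Type*} [Preorder α] [NoMaxOrder α]

theorem IsYablo.not_apply {P : α → Prop} (hP : IsYablo P) (a : α) : ¬ P a := by
  intro ha
  have later_false : ∀ b, a < b → ¬ P b := (hP a).mp ha
  obtain ⟨b, hab⟩ := exists_gt a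
  exact later_false b hab <|
    (hP b).mpr fun c hbc => later_false c (hab.trans hbc)

theorem not_isYablo [Nonempty α] (P : α → Prop) : ¬ IsYablo P := by
  intro hP
  inhabit α
  exact hP.not_apply default <| (hP default).mpr fun b _ => hP.not_apply b

end

theorem no_ltl_yablo_fixed_point :
    ¬ ∃ P : ℕ → Prop, ∀ n : ℕ, P n ↔ ∀ m : ℕ, m ≥ n + 1 → ¬ P m := by
  rintro ⟨P, hP⟩
  refine not_isYablo P fun n => ?_
  simpa only [ge_iff_le, Nat.add_one_le_iff] using hP n
end

section
/- If every function g : B → D is representable by some f : B × B → D (i.e., the map b ↦ f(·, b) is surjective onto D^B), then every function α : D → D has a fixed point, provided B is nonempty. -/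
theorem lawvere_fixed_point_general {B D : Type*} (f : B × B → D)
    (hsurj : ∀ g : B → D, ∃ b : B, ∀ x : B, g x = f (x, b)) :
    ∀ α : D → D, ∃ d : D, α d = d := by
  intro α
  obtain ⟨b, hb⟩ := hsurj fun x => α (f (x, x))
  exact ⟨f (b, b), hb b⟩

theorem lawvere_fixed_point {B D : Type*} [Nonempty B] (f : B × B → D)
    (hsurj : ∀ g : B → D, ∃ b : B, ∀ x : B, g x = f (x, b)) :
    ∀ α : D → D, ∃ d : D, α d = d :=
  lawvere_fixed_point_general f hsurj
end
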